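/- arXiv:1906.04038 — 2 statements merged into one kernel-verified Lean document; each statement's English description precedes it below -/
import Mathlib

section
/- Fix d ≥ 1 and k ∈ {0,1,…,d}. For every x ∈ ℝ^d, the Capra biconjugate of the characteristic function δ of the level set {x : ℓ0(x) ≤ k} equals δ itself; explicitly, the extended-real supremum sup_{y ∈ ℝ^d} ( ¢(x,y) − ‖y‖_(k) ) equals 0 if ℓ0(x) ≤ k and equals +∞ if ℓ0(x) > k. -/
/-!
If `ℓ₀(x) ≤ k`, the support of `x` is one of the index sets in the definition of `‖·‖_(k)`, so
Cauchy–Schwarz on that support gives `¢(x,y) ≤ ‖y‖_(k)`, with equality at `y = 0`. If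
`ℓ₀(x) > k`, every `K` with `|K| ≤ k` misses a nonzero coordinate of `x`, hence
`‖x‖_(k) < ‖x‖`, and along the ray `y = c x` the objective equals `c (‖x‖ − ‖x‖_(k))`,
which is unbounded.
-/

noncomputable section

variable {d : ℕ}

/-- The projection `x_K` of `x` onto the coordinates in `K`
(the components outside `K` vanish). -/
def restr (K : Finset (Fin d)) (x : EuclideanSpace ℝ (Fin d)) : EuclideanSpace ℝ (Fin d) :=
  WithLp.toLp 2 (fun i => if i ∈ K then x i else 0)

/-- The 2-k-symmetric gauge norm `‖y‖_(k) = sup {‖y_K‖ : |K| ≤ k}`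
(equal to `0` for `k = 0`, by the convention `‖·‖_(0) = 0`). -/
def gaugeNorm (k : ℕ) (y : EuclideanSpace ℝ (Fin d)) : ℝ :=
  ⨆ K : {K : Finset (Fin d) // K.card ≤ k}, ‖restr (K : Finset (Fin d)) y‖

/-- The ℓ₀ pseudonorm: the number of nonzero components. -/
def l0 (x : EuclideanSpace ℝ (Fin d)) : ℕ :=
  (Finset.univ.filter fun i => x i ≠ 0).card

open Classical in
/-- The Capra coupling `¢(x,y) = ⟨x,y⟩ / ‖x‖` for `x ≠ 0`, and `¢(0,y) = 0`. -/
def capra (x y : EuclideanSpace ℝ (Fin d)) : ℝ :=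
  if x = 0 then 0 else (inner ℝ x y : ℝ) / ‖x‖

/-- The Capra conjugate of ℓ₀: `y ↦ max_{0 ≤ l ≤ d} (‖y‖_(l) − l)`. -/
def capraConjL0 (y : EuclideanSpace ℝ (Fin d)) : ℝ :=
  ⨆ l : Fin (d + 1), (gaugeNorm (l : ℕ) y - ((l : ℕ) : ℝ))

/-- `L₀(x) = sup_y (⟨x,y⟩ − max_{0 ≤ l ≤ d}(‖y‖_(l) − l))`, with values in `ℝ̄ = EReal`. -/
def L0 (x : EuclideanSpace ℝ (Fin d)) : EReal :=
  ⨆ y : EuclideanSpace ℝ (Fin d), (((inner ℝ x y : ℝ) - capraConjL0 y : ℝ) : EReal)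

/-- The k-support norm: the dual norm of the 2-k-symmetric gauge norm,
`‖y‖^sp_(k) = sup {⟨x,y⟩ : ‖x‖_(k) ≤ 1}`. -/
def suppNorm (k : ℕ) (y : EuclideanSpace ℝ (Fin d)) : ℝ :=
  sSup {c : ℝ | ∃ x : EuclideanSpace ℝ (Fin d), gaugeNorm k x ≤ 1 ∧ c = (inner ℝ x y : ℝ)}

/-- The unit ball of the k-support norm, with the convention `B^sp_(0) = {0}`. -/
def Bsp (d k : ℕ) : Set (EuclideanSpace ℝ (Fin d)) :=
  if k = 0 then {0} else {y | suppNorm k y ≤ 1}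

/-- The degenerate unit sphere `S_K = {x : x_{−K} = 0 and ‖x_K‖ = 1}`. -/
def sphK (K : Finset (Fin d)) : Set (EuclideanSpace ℝ (Fin d)) :=
  {x | (∀ i, i ∉ K → x i = 0) ∧ ‖restr K x‖ = 1}

/-- The degenerate unit ball `B_K = {x : x_{−K} = 0 and ‖x_K‖ ≤ 1}`. -/
def ballK (K : Finset (Fin d)) : Set (EuclideanSpace ℝ (Fin d)) :=
  {x | (∀ i, i ∉ K → x i = 0) ∧ ‖restr K x‖ ≤ 1}

instance (k : ℕ) : Nonempty {K : Finset (Fin d) // K.card ≤ k} :=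
  ⟨⟨∅, Nat.zero_le k⟩⟩

lemma restr_smul (K : Finset (Fin d)) (c : ℝ) (y : EuclideanSpace ℝ (Fin d)) :
    restr K (c • y) = c • restr K y := by
  ext i
  simp only [restr, PiLp.smul_apply, smul_eq_mul, mul_ite, mul_zero]

lemma norm_restr_lt_norm {K : Finset (Fin d)} {x : EuclideanSpace ℝ (Fin d)} {i : Fin d}
    (hiK : i ∉ K) (hxi : x i ≠ 0) : ‖restr K x‖ < ‖x‖ := by
  rw [EuclideanSpace.norm_eq, EuclideanSpace.norm_eq]
  refine Real.sqrt_lt_sqrt (Finset.sum_nonneg fun j _ => by positivity) ?_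
  refine Finset.sum_lt_sum (fun j _ => ?_) ⟨i, Finset.mem_univ _, ?_⟩
  · by_cases hj : j ∈ K <;> simp [restr, hj, sq_nonneg]
  · simpa [restr, hiK] using pow_pos (norm_pos_iff.mpr hxi) 2

lemma inner_restr_support (x y : EuclideanSpace ℝ (Fin d)) :
    inner ℝ x (restr (Finset.univ.filter fun i => x i ≠ 0) y) = inner ℝ x y := by
  simp only [PiLp.inner_apply, RCLike.inner_apply, conj_trivial, restr]
  refine Finset.sum_congr rfl fun i _ => ?_
  by_cases hxi : x i = 0 <;> simp [hxi]

lemma norm_restr_le_gaugeNorm {k : ℕ} {K : Finset (Fin d)} (hK : K.card ≤ k)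
    (y : EuclideanSpace ℝ (Fin d)) : ‖restr K y‖ ≤ gaugeNorm k y :=
  le_ciSup (f := fun K : {K : Finset (Fin d) // K.card ≤ k} => ‖restr (K : Finset (Fin d)) y‖)
    (Set.finite_range _).bddAbove ⟨K, hK⟩

lemma gaugeNorm_nonneg (k : ℕ) (y : EuclideanSpace ℝ (Fin d)) : 0 ≤ gaugeNorm k y :=
  Real.iSup_nonneg fun _ => norm_nonneg _

lemma gaugeNorm_smul (k : ℕ) (c : ℝ) (y : EuclideanSpace ℝ (Fin d)) :
    gaugeNorm k (c • y) = |c| * gaugeNorm k y := by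
  simp only [gaugeNorm, restr_smul, norm_smul, Real.norm_eq_abs]
  exact (Real.mul_iSup_of_nonneg (abs_nonneg c) _).symm

lemma gaugeNorm_zero (k : ℕ) : gaugeNorm k (0 : EuclideanSpace ℝ (Fin d)) = 0 := by
  simpa using gaugeNorm_smul k 0 (0 : EuclideanSpace ℝ (Fin d))

lemma gaugeNorm_lt_norm {k : ℕ} {x : EuclideanSpace ℝ (Fin d)} (h : k < l0 x) :
    gaugeNorm k x < ‖x‖ := by
  obtain ⟨⟨K, hK⟩, hKmax⟩ := exists_eq_ciSup_of_finite
    (f := fun K : {K : Finset (Fin d) // K.card ≤ k} => ‖restr (K : Finset (Fin d)) x‖)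
  have hsupp : ¬ (Finset.univ.filter fun i => x i ≠ 0) ⊆ K := fun hsub =>
    not_lt_of_ge (Finset.card_le_card hsub) (hK.trans_lt h)
  obtain ⟨i, hxi, hiK⟩ := Finset.not_subset.mp hsupp
  rw [gaugeNorm, ← hKmax]
  exact norm_restr_lt_norm hiK (Finset.mem_filter.mp hxi).2

lemma capra_zero_right (x : EuclideanSpace ℝ (Fin d)) : capra x 0 = 0 := by
  by_cases hx : x = 0 <;> simp [capra, hx]

lemma capra_smul_self {x : EuclideanSpace ℝ (Fin d)} (hx : x ≠ 0) (c : ℝ) :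
    capra x (c • x) = c * ‖x‖ := by
  have hnx : ‖x‖ ≠ 0 := norm_ne_zero_iff.mpr hx
  simp only [capra, if_neg hx, real_inner_smul_right, real_inner_self_eq_norm_sq]
  field_simp

lemma capra_le_gaugeNorm {k : ℕ} {x : EuclideanSpace ℝ (Fin d)} (h : l0 x ≤ k)
    (y : EuclideanSpace ℝ (Fin d)) : capra x y ≤ gaugeNorm k y := by
  by_cases hx : x = 0
  · simpa [capra, hx] using gaugeNorm_nonneg k y
  have hnx : 0 < ‖x‖ := norm_pos_iff.mpr hx
  rw [capra, if_neg hx, div_le_iff₀' hnx, ← inner_restr_support]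
  exact (real_inner_le_norm _ _).trans
    (mul_le_mul_of_nonneg_left (norm_restr_le_gaugeNorm h y) hnx.le)

lemma capra_sub_gaugeNorm_smul_self {k : ℕ} {x : EuclideanSpace ℝ (Fin d)} (hx : x ≠ 0)
    {c : ℝ} (hc : 0 ≤ c) :
    capra x (c • x) - gaugeNorm k (c • x) = c * (‖x‖ - gaugeNorm k x) := by
  rw [capra_smul_self hx, gaugeNorm_smul, abs_of_nonneg hc, mul_sub]

lemma EReal.iSup_coe_eq_top_of_not_bddAbove {ι : Sort*} {f : ι → ℝ}
    (hf : ¬ BddAbove (Set.range f)) : ⨆ i, (f i : EReal) = ⊤ := by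
  refine iSup_eq_top.mpr fun b hb => ?_
  obtain ⟨r, hbr, -⟩ := EReal.exists_between_coe_real hb
  obtain ⟨_, ⟨i, rfl⟩, hri⟩ := not_bddAbove_iff.mp hf r
  exact ⟨i, hbr.trans (EReal.coe_lt_coe_iff.mpr hri)⟩

lemma iSup_capra_sub_gaugeNorm_of_l0_le {k : ℕ} {x : EuclideanSpace ℝ (Fin d)}
    (h : l0 x ≤ k) :
    ⨆ y : EuclideanSpace ℝ (Fin d), ((capra x y - gaugeNorm k y : ℝ) : EReal) = 0 := by
  refine le_antisymm (iSup_le fun y => ?_) (le_iSup_of_le 0 ?_)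
  · exact EReal.coe_nonpos.mpr (sub_nonpos.mpr (capra_le_gaugeNorm h y))
  · simp [capra_zero_right, gaugeNorm_zero]

lemma iSup_capra_sub_gaugeNorm_of_lt_l0 {k : ℕ} {x : EuclideanSpace ℝ (Fin d)}
    (h : k < l0 x) :
    ⨆ y : EuclideanSpace ℝ (Fin d), ((capra x y - gaugeNorm k y : ℝ) : EReal) = ⊤ := by
  have hx : x ≠ 0 := by
    rintro rfl
    simp [l0] at h
  have hgap : 0 < ‖x‖ - gaugeNorm k x := sub_pos.mpr (gaugeNorm_lt_norm h)
  refine EReal.iSup_coe_eq_top_of_not_bddAbove (not_bddAbove_iff.mpr fun r => ?_)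
  set c := |r| / (‖x‖ - gaugeNorm k x) + 1
  have hc : 0 ≤ c := by positivity
  refine ⟨_, ⟨c • x, rfl⟩, ?_⟩
  show r < capra x (c • x) - gaugeNorm k (c • x)
  rw [capra_sub_gaugeNorm_smul_self hx hc, add_mul, div_mul_cancel₀ _ hgap.ne']
  linarith [le_abs_self r]

theorem capra_biconjugate_char_level_set_general (d : ℕ) (k : ℕ)
    (x : EuclideanSpace ℝ (Fin d)) :
    (⨆ y : EuclideanSpace ℝ (Fin d), ((capra x y - gaugeNorm k y : ℝ) : EReal)) =
      if l0 x ≤ k then (0 : EReal) else (⊤ : EReal) := by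
  split_ifs with h
  · exact iSup_capra_sub_gaugeNorm_of_l0_le h
  · exact iSup_capra_sub_gaugeNorm_of_lt_l0 (not_le.mp h)

/-- the Capra biconjugate of the characteristic function of the level set
`{x : ℓ₀(x) ≤ k}` is the characteristic function itself: the extended-real supremum
`sup_y (¢(x,y) − ‖y‖_(k))` equals `0` if `ℓ₀(x) ≤ k`, and `+∞` otherwise. -/
theorem capra_biconjugate_char_level_set (d : ℕ) (hd : 1 ≤ d) (k : ℕ) (hk : k ≤ d)
    (x : EuclideanSpace ℝ (Fin d)) :
    (⨆ y : EuclideanSpace ℝ (Fin d), ((capra x y - gaugeNorm k y : ℝ) : EReal)) =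
      if l0 x ≤ k then (0 : EReal) else (⊤ : EReal) :=
  capra_biconjugate_char_level_set_general d k x
end
end

section
/- Fix d ≥ 1 and k ∈ {0,1,…,d}. For every x ∈ ℝ^d: (i) ℓ0(x) ≤ k if and only if ‖x‖_(k) = ‖x‖; and (ii) ℓ0(x) = min{ j ∈ {0,1,…,d} : ‖x‖_(j) = ‖x‖ } (with the convention ‖·‖_(0) = 0). -/
noncomputable section

variable {d : ℕ}

/-! By Pythagoras `‖x‖² = ‖x_K‖² + ∑_{i ∉ K} x_i²`, so `‖x_K‖ ≤ ‖x‖` with equality exactly when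
`x` vanishes off `K`. The supremum defining `‖x‖_(k)` runs over finitely many `K` and is
attained, hence `‖x‖_(k) = ‖x‖` iff some `K` with `|K| ≤ k` contains the support of `x`, i.e.
iff `ℓ₀(x) ≤ k`. Part (ii) follows because `ℓ₀(x) ≤ d`. -/

theorem norm_restr_sq (K : Finset (Fin d)) (x : EuclideanSpace ℝ (Fin d)) :
    ‖restr K x‖ ^ 2 = ∑ i ∈ K, x i ^ 2 := by
  rw [EuclideanSpace.norm_sq_eq,
    ← Finset.sum_subset K.subset_univ fun i _ hi => by simp [restr, hi]]
  exact Finset.sum_congr rfl fun i hi => by simp [restr, hi]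

theorem norm_sq_eq_norm_restr_sq_add (K : Finset (Fin d)) (x : EuclideanSpace ℝ (Fin d)) :
    ‖x‖ ^ 2 = ‖restr K x‖ ^ 2 + ∑ i ∈ Kᶜ, x i ^ 2 := by
  rw [norm_restr_sq, EuclideanSpace.norm_sq_eq]
  simp only [Real.norm_eq_abs, sq_abs]
  exact (Finset.sum_add_sum_compl K _).symm

theorem norm_restr_le (K : Finset (Fin d)) (x : EuclideanSpace ℝ (Fin d)) :
    ‖restr K x‖ ≤ ‖x‖ := by
  refine (pow_le_pow_iff_left₀ (norm_nonneg _) (norm_nonneg _) two_ne_zero).mp ?_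
  rw [norm_sq_eq_norm_restr_sq_add K x]
  exact le_add_of_nonneg_right (Finset.sum_nonneg fun i _ => sq_nonneg _)

theorem norm_restr_eq_norm_iff {K : Finset (Fin d)} {x : EuclideanSpace ℝ (Fin d)} :
    ‖restr K x‖ = ‖x‖ ↔ ∀ i ∉ K, x i = 0 := by
  rw [← pow_left_inj₀ (norm_nonneg _) (norm_nonneg _) two_ne_zero,
    norm_sq_eq_norm_restr_sq_add K x, left_eq_add,
    Finset.sum_eq_zero_iff_of_nonneg fun i _ => sq_nonneg _]
  simp

theorem restr_filter_ne_zero (x : EuclideanSpace ℝ (Fin d)) :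
    restr (Finset.univ.filter fun i => x i ≠ 0) x = x := by
  ext i
  by_cases h : x i = 0 <;> simp [restr, h]

theorem l0_le_card_of_eq_zero_of_notMem {K : Finset (Fin d)} {x : EuclideanSpace ℝ (Fin d)}
    (h : ∀ i ∉ K, x i = 0) : l0 x ≤ K.card :=
  Finset.card_le_card fun i hi => by
    by_contra hiK
    exact (Finset.mem_filter.mp hi).2 (h i hiK)

theorem l0_le_dim (x : EuclideanSpace ℝ (Fin d)) : l0 x ≤ d :=
  (Finset.card_filter_le _ _).trans (Finset.card_fin d).le

theorem gaugeNorm_le_norm (k : ℕ) (x : EuclideanSpace ℝ (Fin d)) : gaugeNorm k x ≤ ‖x‖ :=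
  ciSup_le fun _ => norm_restr_le _ _

theorem gaugeNorm_eq_norm_iff (k : ℕ) (x : EuclideanSpace ℝ (Fin d)) :
    gaugeNorm k x = ‖x‖ ↔ l0 x ≤ k := by
  constructor
  · intro h
    obtain ⟨K, hK⟩ := exists_eq_ciSup_of_finite
      (f := fun K : {K : Finset (Fin d) // K.card ≤ k} => ‖restr (K : Finset (Fin d)) x‖)
    have hvanish := norm_restr_eq_norm_iff.mp (hK.trans h)
    exact (l0_le_card_of_eq_zero_of_notMem hvanish).trans K.2
  · intro h
    refine (gaugeNorm_le_norm k x).antisymm ?_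
    calc ‖x‖ = ‖restr (Finset.univ.filter fun i => x i ≠ 0) x‖ := by
          rw [restr_filter_ne_zero]
      _ ≤ gaugeNorm k x :=
          le_ciSup (f := fun K : {K : Finset (Fin d) // K.card ≤ k} => ‖restr K.1 x‖)
            (Set.finite_range _).bddAbove ⟨_, h⟩

theorem l0_level_set_characterization_general (d : ℕ) (k : ℕ)
    (x : EuclideanSpace ℝ (Fin d)) :
    (l0 x ≤ k ↔ gaugeNorm k x = ‖x‖) ∧
    l0 x = sInf {j : ℕ | j ≤ d ∧ gaugeNorm j x = ‖x‖} := by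
  refine ⟨(gaugeNorm_eq_norm_iff k x).symm, ?_⟩
  have hleast : IsLeast {j : ℕ | j ≤ d ∧ gaugeNorm j x = ‖x‖} (l0 x) :=
    ⟨⟨l0_le_dim x, (gaugeNorm_eq_norm_iff _ x).mpr le_rfl⟩,
      fun j hj => (gaugeNorm_eq_norm_iff j x).mp hj.2⟩
  exact hleast.csInf_eq.symm

/-- (i) `ℓ₀(x) ≤ k ↔ ‖x‖_(k) = ‖x‖`; and
(ii) `ℓ₀(x) = min {j ∈ {0,…,d} : ‖x‖_(j) = ‖x‖}`. -/
theorem l0_level_set_characterization (d : ℕ) (hd : 1 ≤ d) (k : ℕ) (hk : k ≤ d)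
    (x : EuclideanSpace ℝ (Fin d)) :
    (l0 x ≤ k ↔ gaugeNorm k x = ‖x‖) ∧
    l0 x = sInf {j : ℕ | j ≤ d ∧ gaugeNorm j x = ‖x‖} :=
  l0_level_set_characterization_general d k x
end
end
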